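/- arXiv:2308.15680 — 6 statements merged into one kernel-verified Lean document; each statement's English description precedes it below -/
import Mathlib

section
/- For every compactly supported C^1 function f : ℝ → ℝ, one has ‖f‖_{L^2}^8 ≤ ‖f‖_{L^1}^4 ‖f'‖_{L^2}^2 ‖f‖_{L^2}^2; equivalently ‖f‖_{L^2}^6 ≤ ‖f‖_{L^1}^4 ‖f'‖_{L^2}^2 (one-dimensional Nash inequality with non-optimal constant). -/
/-! Writing `f b ^ 2` both as `∫_{-∞}^b (f²)'` and as `-∫_b^∞ (f²)'` gives
`‖f‖_∞² ≤ ∫ |f f'| ≤ ‖f‖₂ ‖f'‖₂` (Cauchy–Schwarz). Together with `‖f‖₂² ≤ ‖f‖₁ ‖f‖_∞` this yields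
`‖f‖₂⁸ ≤ ‖f‖₁⁴ ‖f‖₂² ‖f'‖₂²`, and dividing by `‖f‖₂²` gives the claim. -/

open MeasureTheory Real Filter Set

section

variable {α : Type*} [MeasurableSpace α] {μ : Measure α}

theorem sq_integral_abs_mul_le {f g : α → ℝ} (hf : MemLp f 2 μ) (hg : MemLp g 2 μ) :
    (∫ x, |f x| * |g x| ∂μ) ^ 2 ≤ (∫ x, f x ^ 2 ∂μ) * ∫ x, g x ^ 2 ∂μ := by
  have holder := integral_mul_le_Lp_mul_Lq_of_nonneg Real.HolderConjugate.two_two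
    (.of_forall fun x ↦ abs_nonneg (f x)) (.of_forall fun x ↦ abs_nonneg (g x))
    (by rw [ENNReal.ofReal_ofNat]; exact hf.abs) (by rw [ENNReal.ofReal_ofNat]; exact hg.abs)
  simp only [rpow_two, sq_abs, ← sqrt_eq_rpow] at holder
  calc (∫ x, |f x| * |g x| ∂μ) ^ 2
      ≤ (√(∫ x, f x ^ 2 ∂μ) * √(∫ x, g x ^ 2 ∂μ)) ^ 2 := by
        gcongr
    _ = (∫ x, f x ^ 2 ∂μ) * ∫ x, g x ^ 2 ∂μ := by
        rw [mul_pow, sq_sqrt (integral_nonneg fun x ↦ by positivity),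
          sq_sqrt (integral_nonneg fun x ↦ by positivity)]

theorem integral_sq_le_sqrt_mul_integral_abs {f : α → ℝ} {M : ℝ} (hf : Integrable f μ)
    (hM : ∀ x, f x ^ 2 ≤ M) : ∫ x, f x ^ 2 ∂μ ≤ √M * ∫ x, |f x| ∂μ := by
  rw [← integral_const_mul]
  refine integral_mono_of_nonneg (.of_forall fun x ↦ sq_nonneg _) (hf.abs.const_mul _)
    (.of_forall fun x ↦ ?_)
  calc f x ^ 2 = |f x| * |f x| := by rw [abs_mul_abs_self, sq]
    _ ≤ √M * |f x| := by
      gcongr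
      exact abs_le_sqrt (hM x)

end

theorem HasCompactSupport.two_mul_le_integral_abs_deriv {g : ℝ → ℝ} (hgs : HasCompactSupport g)
    (hg : ContDiff ℝ 1 g) (b : ℝ) : 2 * g b ≤ ∫ x, |deriv g x| := by
  have hint : Integrable (deriv g) :=
    (hg.continuous_deriv le_rfl).integrable_of_hasCompactSupport hgs.deriv
  calc 2 * g b = (∫ x in Iic b, deriv g x) + ∫ x in Ioi b, -deriv g x := by
        rw [integral_neg, hgs.integral_Iic_deriv_eq hg, hgs.integral_Ioi_deriv_eq hg]; ring
    _ ≤ (∫ x in Iic b, |deriv g x|) + ∫ x in Ioi b, |deriv g x| :=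
        add_le_add
          (setIntegral_mono hint.integrableOn hint.abs.integrableOn fun x ↦ le_abs_self _)
          (setIntegral_mono hint.neg.integrableOn hint.abs.integrableOn fun x ↦ neg_le_abs _)
    _ = ∫ x, |deriv g x| := by
        rw [← setIntegral_union (Iic_disjoint_Ioi le_rfl) measurableSet_Ioi
          hint.abs.integrableOn hint.abs.integrableOn, Iic_union_Ioi, setIntegral_univ]

theorem HasCompactSupport.sq_le_integral_abs_mul_abs_deriv {f : ℝ → ℝ}
    (hfs : HasCompactSupport f) (hf : ContDiff ℝ 1 f) (b : ℝ) :
    f b ^ 2 ≤ ∫ x, |f x| * |deriv f x| := by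
  have hderiv : ∀ x, deriv (fun y ↦ f y ^ 2) x = 2 * (f x * deriv f x) := fun x ↦ by
    rw [deriv_fun_pow (hf.differentiable one_ne_zero x)]; ring
  have hsq : HasCompactSupport fun y ↦ f y ^ 2 :=
    hfs.comp_left (g := (· ^ 2)) (zero_pow two_ne_zero)
  have := hsq.two_mul_le_integral_abs_deriv (hf.pow 2) b
  simp only [hderiv, abs_mul, abs_two, integral_const_mul] at this
  linarith

theorem pow_three_le_of_le_sqrt_mul {A B C L : ℝ} (hA : 0 ≤ A) (hB : 0 ≤ B) (hC : 0 ≤ C)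
    (hBA : B ≤ √A * L) (hAB : A ^ 2 ≤ B * C) : B ^ 3 ≤ L ^ 4 * C := by
  rcases hB.eq_or_lt with rfl | hB
  · rw [zero_pow three_ne_zero]; positivity
  refine le_of_mul_le_mul_left ?_ hB
  calc B * B ^ 3 = B ^ 4 := by ring
    _ ≤ (√A * L) ^ 4 := by gcongr
    _ = A ^ 2 * L ^ 4 := by rw [mul_pow, show √A ^ 4 = (√A ^ 2) ^ 2 by ring, sq_sqrt hA]
    _ ≤ B * C * L ^ 4 := by gcongr
    _ = B * (L ^ 4 * C) := by ring

/-- One-dimensional Nash inequality with non-optimal constant: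
for every compactly supported `C¹` function `f : ℝ → ℝ`,
`‖f‖_{L²}⁶ ≤ ‖f‖_{L¹}⁴ ‖f'‖_{L²}²`, i.e. `(∫ f²)³ ≤ (∫|f|)⁴ (∫ (f')²)`. -/
theorem nash_one_dim (f : ℝ → ℝ)
    (hf : ContDiff ℝ 1 f) (hsupp : HasCompactSupport f) :
    (∫ x : ℝ, f x ^ 2) ^ 3 ≤
      (∫ x : ℝ, |f x|) ^ 4 * ∫ x : ℝ, deriv f x ^ 2 := by
  have hf_memLp : MemLp f 2 := hf.continuous.memLp_of_hasCompactSupport hsupp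
  have hf'_memLp : MemLp (deriv f) 2 :=
    (hf.continuous_deriv le_rfl).memLp_of_hasCompactSupport hsupp.deriv
  have h_sup_bound : ∀ b, f b ^ 2 ≤ ∫ x, |f x| * |deriv f x| :=
    hsupp.sq_le_integral_abs_mul_abs_deriv hf
  have hf_int : Integrable f := hf.continuous.integrable_of_hasCompactSupport hsupp
  have h_interpolation := integral_sq_le_sqrt_mul_integral_abs hf_int h_sup_bound
  have h_cauchy_schwarz := sq_integral_abs_mul_le hf_memLp hf'_memLp
  exact pow_three_le_of_le_sqrt_mul (integral_nonneg fun x ↦ by positivity)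
    (integral_nonneg fun x ↦ by positivity) (integral_nonneg fun x ↦ by positivity)
    h_interpolation h_cauchy_schwarz
end

section
/- Let V : ℝ → ℝ be continuous, bounded, nonnegative, and suppose ψ₁, ψ₂ : ℝ → ℝ are positive C^2 solutions of -ψ'' + Vψ = 0 on ℝ. Set ψ_* = (ψ₁ψ₂)^{1/2} and let k = ψ₁'ψ₂ - ψ₁ψ₂' (the Wronskian, which is constant). Then -ψ_*'' + Vψ_* = k²/(4 ψ_*³) on ℝ. -/
open MeasureTheory Real Filter Set

/-!
With `P = ψ₁ψ₂` and `ψ_* = √P`, the equations give `P'' = 2VP + 2ψ₁'ψ₂'`, while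
`ψ_*'' = P''/(2ψ_*) - P'²/(4ψ_*³)`. Hence `-ψ_*'' + Vψ_* = (P'² - 4Pψ₁'ψ₂')/(4ψ_*³)`,
and `P'² - 4Pψ₁'ψ₂' = (ψ₁'ψ₂ - ψ₁ψ₂')² = k²`.
-/

theorem hasDerivAt_deriv_mul {f g : ℝ → ℝ} {f'' g'' x : ℝ}
    (hf : Differentiable ℝ f) (hg : Differentiable ℝ g)
    (hf'' : HasDerivAt (deriv f) f'' x) (hg'' : HasDerivAt (deriv g) g'' x) :
    HasDerivAt (deriv fun y => f y * g y)
      (f'' * g x + 2 * (deriv f x * deriv g x) + f x * g'') x := by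
  have hderiv : deriv (fun y => f y * g y) = fun y => deriv f y * g y + f y * deriv g y :=
    funext fun y => ((hf y).hasDerivAt.mul (hg y).hasDerivAt).deriv
  rw [hderiv]
  exact ((hf''.mul (hg x).hasDerivAt).add ((hf x).hasDerivAt.mul hg'')).congr_deriv (by ring)

theorem hasDerivAt_deriv_sqrt {f : ℝ → ℝ} {f'' x : ℝ}
    (hf : Differentiable ℝ f) (hpos : ∀ y, 0 < f y) (hf'' : HasDerivAt (deriv f) f'' x) :
    HasDerivAt (deriv fun y => √(f y))
      (f'' / (2 * √(f x)) - deriv f x ^ 2 / (4 * √(f x) ^ 3)) x := by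
  have hsqrt : ∀ y, HasDerivAt (fun y => √(f y)) (deriv f y / (2 * √(f y))) y :=
    fun y => (hf y).hasDerivAt.sqrt (hpos y).ne'
  rw [funext fun y => (hsqrt y).deriv]
  have hs : 0 < √(f x) := sqrt_pos.mpr (hpos x)
  refine (hf''.div ((hsqrt x).const_mul 2) (by positivity)).congr_deriv ?_
  field_simp
  ring

theorem geometric_mean_superharmonic_general (V ψ₁ ψ₂ : ℝ → ℝ) (k : ℝ)
    (h1 : ContDiff ℝ 2 ψ₁) (h2 : ContDiff ℝ 2 ψ₂)
    (h1pos : ∀ x, 0 < ψ₁ x) (h2pos : ∀ x, 0 < ψ₂ x)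
    (heq1 : ∀ x, deriv (deriv ψ₁) x = V x * ψ₁ x)
    (heq2 : ∀ x, deriv (deriv ψ₂) x = V x * ψ₂ x)
    (hk : ∀ x, deriv ψ₁ x * ψ₂ x - ψ₁ x * deriv ψ₂ x = k) :
    ∀ x, -deriv (deriv fun y => Real.sqrt (ψ₁ y * ψ₂ y)) x
        + V x * Real.sqrt (ψ₁ x * ψ₂ x)
      = k ^ 2 / (4 * Real.sqrt (ψ₁ x * ψ₂ x) ^ 3) := by
  intro x
  have hP : ∀ y, 0 < ψ₁ y * ψ₂ y := fun y => mul_pos (h1pos y) (h2pos y)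
  have hψ₁'' : HasDerivAt (deriv ψ₁) (V x * ψ₁ x) x :=
    heq1 x ▸ (h1.differentiable_deriv_two x).hasDerivAt
  have hψ₂'' : HasDerivAt (deriv ψ₂) (V x * ψ₂ x) x :=
    heq2 x ▸ (h2.differentiable_deriv_two x).hasDerivAt
  have hd1 := h1.differentiable two_ne_zero
  have hd2 := h2.differentiable two_ne_zero
  have hP' : deriv (fun y => ψ₁ y * ψ₂ y) x = deriv ψ₁ x * ψ₂ x + ψ₁ x * deriv ψ₂ x :=
    ((hd1 x).hasDerivAt.mul (hd2 x).hasDerivAt).deriv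
  have hsqrt'' := hasDerivAt_deriv_sqrt (f := fun y => ψ₁ y * ψ₂ y) (hd1.mul hd2) hP
    (hasDerivAt_deriv_mul hd1 hd2 hψ₁'' hψ₂'')
  have hs : 0 < √(ψ₁ x * ψ₂ x) := sqrt_pos.mpr (hP x)
  have hsq : √(ψ₁ x * ψ₂ x) ^ 2 = ψ₁ x * ψ₂ x := sq_sqrt (hP x).le
  rw [hsqrt''.deriv, hP', ← hk x]
  field_simp
  linear_combination (8 * V x * √(ψ₁ x * ψ₂ x) ^ 2 - 8 * deriv ψ₁ x * deriv ψ₂ x) * hsq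

/-- If `ψ₁, ψ₂` are positive `C²` solutions of `-ψ'' + Vψ = 0` with constant
Wronskian `k = ψ₁'ψ₂ - ψ₁ψ₂'`, then `ψ_* = √(ψ₁ψ₂)` satisfies
`-ψ_*'' + Vψ_* = k²/(4ψ_*³)`. -/
theorem geometric_mean_superharmonic (V ψ₁ ψ₂ : ℝ → ℝ) (k : ℝ)
    (hV : Continuous V) (hVbdd : ∃ M, ∀ x, V x ≤ M) (hVnn : ∀ x, 0 ≤ V x)
    (h1 : ContDiff ℝ 2 ψ₁) (h2 : ContDiff ℝ 2 ψ₂)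
    (h1pos : ∀ x, 0 < ψ₁ x) (h2pos : ∀ x, 0 < ψ₂ x)
    (heq1 : ∀ x, deriv (deriv ψ₁) x = V x * ψ₁ x)
    (heq2 : ∀ x, deriv (deriv ψ₂) x = V x * ψ₂ x)
    (hk : ∀ x, deriv ψ₁ x * ψ₂ x - ψ₁ x * deriv ψ₂ x = k) :
    ∀ x, -deriv (deriv fun y => Real.sqrt (ψ₁ y * ψ₂ y)) x
        + V x * Real.sqrt (ψ₁ x * ψ₂ x)
      = k ^ 2 / (4 * Real.sqrt (ψ₁ x * ψ₂ x) ^ 3) :=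
  geometric_mean_superharmonic_general V ψ₁ ψ₂ k h1 h2 h1pos h2pos heq1 heq2 hk
end

section
/- Let V : ℝ → ℝ be continuous and nonnegative, let ψ : ℝ → (0,∞) be C^2 with -ψ'' + Vψ ≥ 0 on ℝ, and let f ∈ C_0^1(ℝ). Writing g = f/ψ, one has ∫_ℝ (|f'|² + V f²) dx = ∫_ℝ |g'|² ψ² dx + ∫_ℝ g² ψ (-ψ'' + Vψ) dx. -/
open MeasureTheory Filter

/-!
Write `f = g ψ`. Expanding `|(gψ)'|²` and recognising `2gg'ψψ' + g²ψ'² = (g²ψψ')' - g²ψψ''`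
gives the pointwise identity `|f'|² + V f² = |g'|² ψ² + (g²ψψ')' + g² ψ (-ψ'' + Vψ)`;
the total derivative `(g²ψψ')'` is compactly supported, so it integrates to zero.
-/

theorem integral_deriv_eq_zero_of_hasCompactSupport {u : ℝ → ℝ} (hu : ContDiff ℝ 1 u)
    (h : HasCompactSupport u) : ∫ x, deriv u x = 0 :=
  integral_eq_zero_of_hasDerivAt_of_integrable
    (fun x => (hu.differentiable one_ne_zero x).hasDerivAt)
    ((hu.continuous_deriv le_rfl).integrable_of_hasCompactSupport h.deriv)
    (hu.continuous.integrable_of_hasCompactSupport h)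

theorem integral_add_deriv_add_eq {a b u : ℝ → ℝ} (ha : Integrable a) (hb : Integrable b)
    (hu : ContDiff ℝ 1 u) (husupp : HasCompactSupport u) :
    ∫ x, a x + deriv u x + b x = (∫ x, a x) + ∫ x, b x := by
  have hu' : Integrable (deriv u) :=
    (hu.continuous_deriv le_rfl).integrable_of_hasCompactSupport husupp.deriv
  rw [integral_add (ha.fun_add hu') hb, integral_add ha hu',
    integral_deriv_eq_zero_of_hasCompactSupport hu husupp, add_zero]

theorem sq_deriv_mul_eq {g ψ : ℝ → ℝ} {x : ℝ} (hg : DifferentiableAt ℝ g x)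
    (hψ : DifferentiableAt ℝ ψ x) (hψ' : DifferentiableAt ℝ (deriv ψ) x) :
    deriv (fun y => g y * ψ y) x ^ 2
      = deriv g x ^ 2 * ψ x ^ 2 + deriv (fun y => g y ^ 2 * ψ y * deriv ψ y) x
        - g x ^ 2 * ψ x * deriv (deriv ψ) x := by
  rw [deriv_fun_mul hg hψ, deriv_fun_mul (by fun_prop) hψ', deriv_fun_mul (by fun_prop) hψ,
    deriv_fun_pow hg]
  ring

theorem ground_state_substitution_general (V ψ f : ℝ → ℝ)
    (hV : Continuous V)
    (hψ : ContDiff ℝ 2 ψ) (hψpos : ∀ x, 0 < ψ x)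
    (hf : ContDiff ℝ 1 f) (hsupp : HasCompactSupport f) :
    (∫ x : ℝ, deriv f x ^ 2 + V x * f x ^ 2)
      = (∫ x : ℝ, (deriv (fun y => f y / ψ y) x) ^ 2 * ψ x ^ 2)
        + ∫ x : ℝ, (f x / ψ x) ^ 2 * ψ x * (-deriv (deriv ψ) x + V x * ψ x) := by
  set g : ℝ → ℝ := fun y => f y / ψ y
  have hψ1 : ContDiff ℝ 1 ψ := hψ.of_le (by norm_num)
  have hψ' : ContDiff ℝ 1 (deriv ψ) := (contDiff_succ_iff_deriv (n := 1).mp hψ).2.2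
  have hg : ContDiff ℝ 1 g := hf.div hψ1 fun x => (hψpos x).ne'
  have hgsupp : HasCompactSupport g := hsupp.mono (by simp [g, Function.support_div])
  have hg2supp : HasCompactSupport fun x => g x ^ 2 := hgsupp.comp_left (g := (· ^ 2)) (by simp)
  set u : ℝ → ℝ := fun x => g x ^ 2 * ψ x * deriv ψ x
  have hu : ContDiff ℝ 1 u := ((hg.pow 2).mul hψ1).mul hψ'
  have hfg : f = fun y => g y * ψ y := funext fun y => (div_mul_cancel₀ _ (hψpos y).ne').symm
  have pointwise : ∀ x, deriv f x ^ 2 + V x * f x ^ 2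
      = deriv g x ^ 2 * ψ x ^ 2 + deriv u x + g x ^ 2 * ψ x * (-deriv (deriv ψ) x + V x * ψ x) := by
    intro x
    rw [hfg, sq_deriv_mul_eq (hg.differentiable one_ne_zero x)
      (hψ1.differentiable one_ne_zero x) (hψ'.differentiable one_ne_zero x)]
    ring
  have hg'c := hg.continuous_deriv le_rfl
  have hψ''c := hψ'.continuous_deriv le_rfl
  rw [integral_congr_ae (Eventually.of_forall pointwise)]
  refine integral_add_deriv_add_eq ?_ ?_ hu hg2supp.mul_right.mul_right
  · exact Continuous.integrable_of_hasCompactSupport (by fun_prop)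
      (hgsupp.deriv.comp_left (g := (· ^ 2)) (by simp)).mul_right
  · exact Continuous.integrable_of_hasCompactSupport (by fun_prop) hg2supp.mul_right.mul_right

/-- Ground-state substitution identity: for `V` continuous nonnegative,
`ψ` a positive `C²` function with `-ψ'' + Vψ ≥ 0`, and `f ∈ C₀¹(ℝ)`,
writing `g = f/ψ` one has
`∫ (|f'|² + V f²) = ∫ |g'|² ψ² + ∫ g² ψ (-ψ'' + Vψ)`. -/
theorem ground_state_substitution (V ψ f : ℝ → ℝ)
    (hV : Continuous V) (hVnn : ∀ x, 0 ≤ V x)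
    (hψ : ContDiff ℝ 2 ψ) (hψpos : ∀ x, 0 < ψ x)
    (hsuper : ∀ x, 0 ≤ -deriv (deriv ψ) x + V x * ψ x)
    (hf : ContDiff ℝ 1 f) (hsupp : HasCompactSupport f) :
    (∫ x : ℝ, deriv f x ^ 2 + V x * f x ^ 2)
      = (∫ x : ℝ, (deriv (fun y => f y / ψ y) x) ^ 2 * ψ x ^ 2)
        + ∫ x : ℝ, (f x / ψ x) ^ 2 * ψ x * (-deriv (deriv ψ) x + V x * ψ x) :=
  ground_state_substitution_general V ψ f hV hψ hψpos hf hsupp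
end

section
/- Let V : ℝ → ℝ be continuous, bounded, nonnegative with 0 < ∫_ℝ |x| V(x) dx < ∞. Then there exists a positive increasing C^2 solution ψ₁ of -ψ''+Vψ=0 on ℝ with ψ₁(x) → 1 and x ψ₁'(x) → 0 as x → -∞. -/
open MeasureTheory Real Filter Set
open Topology BoundedContinuousFunction

/-!
`ψ₁` is the fixed point of `ψ = 1 + volterra (V ψ)`, where `volterra q` solves `u'' = q` with
`u, u' → 0` at `-∞`. Writing `ψ = w f` with `w(x) = (1 + x⁺) exp (2 ∫_{-∞}^x (1 + |y|) V)`,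
the map becomes a `1/2`-contraction on bounded continuous `f`: the kernel estimate
`(x - y)(1 + y⁺) ≤ (1 + x⁺)(1 + |y|)` and the exact integral
`∫_{-∞}^x g e^{2η} = (e^{2η(x)} - 1)/2` for `η' = g` bound the weighted operator by `w(x)/2`.
The contraction preserves `f ≥ 0`, which gives `ψ ≥ 1`. Then `ψ' = ∫_{-∞}^x V ψ ≥ 0` and
`ψ'' = V ψ`, while `ψ - 1` and `|x| ψ'` are both dominated by the vanishing tail
`∫_{-∞}^x |y| V ψ`.
-/

lemma hasDerivAt_integral_Iic {h : ℝ → ℝ} (hc : Continuous h)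
    (hi : ∀ b, IntegrableOn h (Iic b)) (x : ℝ) :
    HasDerivAt (fun t => ∫ y in Iic t, h y) (h x) x := by
  have hsplit : ∀ t, ∫ y in Iic t, h y = (∫ y in Iic x, h y) + ∫ y in x..t, h y := fun t => by
    rw [← intervalIntegral.integral_Iic_sub_Iic (hi x) (hi t)]
    ring
  exact ((intervalIntegral.integral_hasDerivAt_right (hc.intervalIntegrable x x)
      (hc.stronglyMeasurableAtFilter _ _) hc.continuousAt).const_add _).congr_of_eventuallyEq
    (Eventually.of_forall hsplit)

lemma contDiff_two_of_hasDerivAt {f f' f'' : ℝ → ℝ} (hf : ∀ x, HasDerivAt f (f' x) x)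
    (hf' : ∀ x, HasDerivAt f' (f'' x) x) (hf'' : Continuous f'') : ContDiff ℝ 2 f := by
  have hd : deriv f = f' := funext fun x => (hf x).deriv
  have hd' : deriv f' = f'' := funext fun x => (hf' x).deriv
  rw [show (2 : WithTop ℕ∞) = 1 + 1 from rfl, contDiff_succ_iff_deriv, hd,
    contDiff_one_iff_deriv, hd']
  exact ⟨fun x => (hf x).differentiableAt, by simp, fun x => (hf' x).differentiableAt, hf''⟩

lemma Continuous.integrable_of_integrable_abs_mul {f : ℝ → ℝ} (hf : Continuous f)
    (h : Integrable fun x => |x| * f x) : Integrable f := by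
  rw [← integrableOn_univ, ← union_compl_self (Icc (-1 : ℝ) 1)]
  refine hf.integrableOn_Icc.union
    (h.norm.integrableOn.mono' hf.aestronglyMeasurable.restrict ?_)
  rw [ae_restrict_iff' measurableSet_Icc.compl]
  refine Eventually.of_forall fun x hx => ?_
  have hx1 : 1 ≤ |x| := by
    by_contra! hlt
    exact hx (abs_le.1 hlt.le)
  rw [norm_mul, Real.norm_of_nonneg (abs_nonneg x)]
  exact le_mul_of_one_le_left (norm_nonneg _) hx1

def IntegrableFirstMomentIic (q : ℝ → ℝ) : Prop :=
  ∀ x, IntegrableOn q (Iic x) ∧ IntegrableOn (fun y => y * q y) (Iic x)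

noncomputable def volterra (q : ℝ → ℝ) (x : ℝ) : ℝ := ∫ y in Iic x, (x - y) * q y

lemma volterra_nonneg {q : ℝ → ℝ} (hq0 : ∀ y, 0 ≤ q y) (x : ℝ) : 0 ≤ volterra q x :=
  setIntegral_nonneg measurableSet_Iic fun y hy => mul_nonneg (sub_nonneg.2 hy) (hq0 y)

namespace IntegrableFirstMomentIic

variable {q q₁ q₂ : ℝ → ℝ}

lemma integrableOn_kernel (hq : IntegrableFirstMomentIic q) (x : ℝ) :
    IntegrableOn (fun y => (x - y) * q y) (Iic x) := by
  simp_rw [sub_mul]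
  exact ((hq x).1.const_mul x).sub (hq x).2

lemma integrableOn_abs_mul (hq : IntegrableFirstMomentIic q) (hq0 : ∀ y, 0 ≤ q y) (x : ℝ) :
    IntegrableOn (fun y => |y| * q y) (Iic x) := by
  refine (hq x).2.abs.congr (Eventually.of_forall fun y => ?_)
  simp only [abs_mul, abs_of_nonneg (hq0 y)]

lemma volterra_eq (hq : IntegrableFirstMomentIic q) (x : ℝ) :
    volterra q x = x * (∫ y in Iic x, q y) - ∫ y in Iic x, y * q y := by
  simp_rw [volterra, sub_mul]
  rw [integral_sub ((hq x).1.const_mul x) (hq x).2, integral_const_mul]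

lemma volterra_sub (h₁ : IntegrableFirstMomentIic q₁) (h₂ : IntegrableFirstMomentIic q₂)
    (x : ℝ) : volterra (fun y => q₁ y - q₂ y) x = volterra q₁ x - volterra q₂ x := by
  simp_rw [volterra, mul_sub]
  exact integral_sub (h₁.integrableOn_kernel x) (h₂.integrableOn_kernel x)

lemma hasDerivAt_volterra (hq : IntegrableFirstMomentIic q) (hqc : Continuous q) (x : ℝ) :
    HasDerivAt (volterra q) (∫ y in Iic x, q y) x := by
  rw [funext hq.volterra_eq]
  have hd : HasDerivAt (fun t => t * (∫ y in Iic t, q y) - ∫ y in Iic t, y * q y)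
      (1 * (∫ y in Iic x, q y) + x * q x - x * q x) x :=
    ((hasDerivAt_id' x).mul (hasDerivAt_integral_Iic hqc (fun b => (hq b).1) x)).sub
      (hasDerivAt_integral_Iic (by fun_prop) (fun b => (hq b).2) x)
  simpa using hd

lemma continuous_volterra (hq : IntegrableFirstMomentIic q) (hqc : Continuous q) :
    Continuous (volterra q) :=
  continuous_iff_continuousAt.2 fun x => (hq.hasDerivAt_volterra hqc x).continuousAt

lemma tendsto_volterra_atBot (hq : IntegrableFirstMomentIic q) (hq0 : ∀ y, 0 ≤ q y) :
    Tendsto (volterra q) atBot (𝓝 0) := by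
  refine squeeze_zero' (Eventually.of_forall (volterra_nonneg hq0)) ?_
    (tendsto_integral_Iic_zero (μ := volume) (f := fun y => |y| * q y) tendsto_id)
  filter_upwards [eventually_le_atBot 0] with x hx
  refine setIntegral_mono_on (hq.integrableOn_kernel x) (hq.integrableOn_abs_mul hq0 x)
    measurableSet_Iic fun y hy => mul_le_mul_of_nonneg_right ?_ (hq0 y)
  rw [abs_of_nonpos ((mem_Iic.1 hy).trans hx)]
  linarith

lemma tendsto_mul_integral_Iic_atBot (hq : IntegrableFirstMomentIic q) (hq0 : ∀ y, 0 ≤ q y) :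
    Tendsto (fun x => x * ∫ y in Iic x, q y) atBot (𝓝 0) := by
  refine squeeze_zero_norm' ?_
    (tendsto_integral_Iic_zero (μ := volume) (f := fun y => |y| * q y) tendsto_id)
  filter_upwards [eventually_le_atBot 0] with x hx
  rw [norm_mul, Real.norm_eq_abs, Real.norm_of_nonneg (setIntegral_nonneg measurableSet_Iic
    fun y _ => hq0 y), ← integral_const_mul]
  refine setIntegral_mono_on ((hq x).1.const_mul _) (hq.integrableOn_abs_mul hq0 x)
    measurableSet_Iic fun y hy => mul_le_mul_of_nonneg_right ?_ (hq0 y)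
  rw [abs_of_nonpos hx, abs_of_nonpos ((mem_Iic.1 hy).trans hx)]
  linarith [mem_Iic.1 hy]

end IntegrableFirstMomentIic

lemma integrable_mul_exp_integral_Iic {g : ℝ → ℝ} (hgc : Continuous g) (hg : Integrable g) :
    Integrable fun y => g y * exp (2 * ∫ z in Iic y, g z) := by
  have hη : Continuous fun t => ∫ z in Iic t, g z := continuous_iff_continuousAt.2 fun t =>
    (hasDerivAt_integral_Iic hgc (fun _ => hg.integrableOn) t).continuousAt
  refine hg.mul_bdd (c := exp (2 * ∫ z, ‖g z‖))
    (by fun_prop : Continuous fun y => exp (2 * ∫ z in Iic y, g z)).aestronglyMeasurable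
    (Eventually.of_forall fun t => ?_)
  rw [Real.norm_of_nonneg (exp_pos _).le, exp_le_exp, mul_le_mul_iff_right₀ two_pos]
  exact (Real.le_norm_self _).trans ((norm_integral_le_integral_norm _).trans
    (setIntegral_le_integral hg.norm (Eventually.of_forall fun _ => norm_nonneg _)))

lemma integral_Iic_mul_exp_integral_Iic {g : ℝ → ℝ} (hgc : Continuous g) (hg : Integrable g)
    (x : ℝ) : ∫ y in Iic x, g y * exp (2 * ∫ z in Iic y, g z)
      = (exp (2 * ∫ y in Iic x, g y) - 1) / 2 := by
  have hη : ∀ t, HasDerivAt (fun t => ∫ z in Iic t, g z) (g t) t :=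
    hasDerivAt_integral_Iic hgc fun _ => hg.integrableOn
  have hF : ∀ t, HasDerivAt (fun t => exp (2 * ∫ z in Iic t, g z) / 2)
      (g t * exp (2 * ∫ z in Iic t, g z)) t := fun t =>
    (((hη t).const_mul 2).exp.div_const 2).congr_deriv (by ring)
  have hlim : Tendsto (fun t => exp (2 * ∫ z in Iic t, g z) / 2) atBot (𝓝 (1 / 2)) := by
    simpa using (((tendsto_integral_Iic_zero (μ := volume) (f := g) tendsto_id).const_mul
      2).rexp.div_const 2)
  rw [integral_Iic_of_hasDerivAt_of_tendsto (hF x).continuousAt.continuousWithinAt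
    (fun t _ => hF t) (integrable_mul_exp_integral_Iic hgc hg).integrableOn hlim]
  exact (sub_div _ _ _).symm

lemma sub_mul_one_add_max_le {x y : ℝ} (hyx : y ≤ x) :
    (x - y) * (1 + max y 0) ≤ (1 + max x 0) * (1 + |y|) := by
  rcases le_total y 0 with h | h
  · rw [max_eq_right h, abs_of_nonpos h]
    nlinarith [le_max_left x 0, le_max_right x 0]
  · rw [max_eq_left h, abs_of_nonneg h, max_eq_left (h.trans hyx)]
    nlinarith

/-- A Bielecki-type weight. -/
noncomputable def weight (V : ℝ → ℝ) (x : ℝ) : ℝ :=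
  (1 + max x 0) * exp (2 * ∫ y in Iic x, (1 + |y|) * V y)

section Weight

variable {V : ℝ → ℝ}

lemma one_le_weight (hVnn : ∀ x, 0 ≤ V x) (x : ℝ) : 1 ≤ weight V x :=
  one_le_mul_of_one_le_of_one_le (by simp) (one_le_exp (mul_nonneg two_pos.le
    (setIntegral_nonneg measurableSet_Iic fun y _ => mul_nonneg (by positivity) (hVnn y))))

lemma weight_pos (hVnn : ∀ x, 0 ≤ V x) (x : ℝ) : 0 < weight V x :=
  one_pos.trans_le (one_le_weight hVnn x)

lemma weight_le (hVnn : ∀ x, 0 ≤ V x) (hg : Integrable fun y => (1 + |y|) * V y) (x : ℝ) :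
    weight V x ≤ exp (2 * ∫ y, (1 + |y|) * V y) * (1 + max x 0) := by
  rw [weight, mul_comm]
  gcongr
  · exact Eventually.of_forall fun y => mul_nonneg (by positivity) (hVnn y)
  · exact Measure.restrict_le_self

lemma continuous_weight (hV : Continuous V) (hg : Integrable fun y => (1 + |y|) * V y) :
    Continuous (weight V) := by
  have hη : Continuous fun t => ∫ y in Iic t, (1 + |y|) * V y :=
    continuous_iff_continuousAt.2 fun t =>
      (hasDerivAt_integral_Iic (by fun_prop) (fun _ => hg.integrableOn) t).continuousAt
  unfold weight
  fun_prop

lemma abs_volterra_le_of_abs_le_weight (hV : Continuous V) (hVnn : ∀ x, 0 ≤ V x)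
    (hg : Integrable fun y => (1 + |y|) * V y) {q : ℝ → ℝ} {c : ℝ} (hc : 0 ≤ c)
    (hq : ∀ y, |q y| ≤ c * (V y * weight V y)) (x : ℝ) :
    |volterra q x| ≤ c * weight V x / 2 := by
  set η := fun t => ∫ y in Iic t, (1 + |y|) * V y
  have hpt : ∀ y ≤ x, ‖(x - y) * q y‖
      ≤ c * (1 + max x 0) * ((1 + |y|) * V y * exp (2 * η y)) := fun y hyx => by
    have hcV : 0 ≤ c * V y * exp (2 * η y) := by have := hVnn y; positivity
    calc ‖(x - y) * q y‖ = (x - y) * |q y| := by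
          rw [norm_mul, Real.norm_of_nonneg (sub_nonneg.2 hyx), Real.norm_eq_abs]
      _ ≤ (x - y) * (c * (V y * weight V y)) :=
          mul_le_mul_of_nonneg_left (hq y) (sub_nonneg.2 hyx)
      _ = c * V y * exp (2 * η y) * ((x - y) * (1 + max y 0)) := by rw [weight]; ring
      _ ≤ c * V y * exp (2 * η y) * ((1 + max x 0) * (1 + |y|)) :=
          mul_le_mul_of_nonneg_left (sub_mul_one_add_max_le hyx) hcV
      _ = c * (1 + max x 0) * ((1 + |y|) * V y * exp (2 * η y)) := by ring
  have hdom : IntegrableOn (fun y => c * (1 + max x 0) * ((1 + |y|) * V y * exp (2 * η y)))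
      (Iic x) :=
    ((integrable_mul_exp_integral_Iic (by fun_prop) hg).const_mul _).integrableOn
  have hcx : 0 ≤ c * (1 + max x 0) := by positivity
  calc |volterra q x|
      ≤ ∫ y in Iic x, c * (1 + max x 0) * ((1 + |y|) * V y * exp (2 * η y)) :=
        norm_integral_le_of_norm_le hdom
          ((ae_restrict_iff' measurableSet_Iic).2 (Eventually.of_forall hpt))
    _ = c * (1 + max x 0) * ((exp (2 * η x) - 1) / 2) := by
        rw [integral_const_mul, integral_Iic_mul_exp_integral_Iic (by fun_prop) hg]
    _ ≤ c * weight V x / 2 := by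
        rw [weight]
        nlinarith

lemma integrableFirstMomentIic_of_abs_le (hVnn : ∀ x, 0 ≤ V x)
    (hg : Integrable fun y => (1 + |y|) * V y) {q : ℝ → ℝ} {c : ℝ} (hqc : Continuous q)
    (hc : 0 ≤ c) (hq : ∀ y, |q y| ≤ c * (1 + max y 0) * V y) :
    IntegrableFirstMomentIic q := by
  intro x
  have hK0 : 0 ≤ c * (1 + max x 0) := by positivity
  have hdom : IntegrableOn (fun y => c * (1 + max x 0) * ((1 + |y|) * V y)) (Iic x) :=
    (hg.const_mul _).integrableOn
  have hK : ∀ y ≤ x, |q y| ≤ c * (1 + max x 0) * V y := fun y hyx => by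
    have := hVnn y
    exact (hq y).trans (by gcongr)
  have hV1 : ∀ y, V y ≤ (1 + |y|) * V y := fun y =>
    le_mul_of_one_le_left (hVnn y) (by linarith [abs_nonneg y])
  refine ⟨hdom.mono' hqc.aestronglyMeasurable.restrict ?_,
    hdom.mono' (continuous_id.mul hqc).aestronglyMeasurable.restrict ?_⟩ <;>
    refine (ae_restrict_iff' measurableSet_Iic).2 (Eventually.of_forall fun y hy => ?_)
  · exact (hK y hy).trans (mul_le_mul_of_nonneg_left (hV1 y) hK0)
  · calc ‖y * q y‖ = |y| * |q y| := by rw [norm_mul, Real.norm_eq_abs, Real.norm_eq_abs]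
      _ ≤ |y| * (c * (1 + max x 0) * V y) :=
          mul_le_mul_of_nonneg_left (hK y hy) (abs_nonneg y)
      _ ≤ c * (1 + max x 0) * ((1 + |y|) * V y) := by
          have := mul_nonneg hK0 (hVnn y)
          nlinarith

lemma abs_mul_weight_mul_le (hVnn : ∀ x, 0 ≤ V x) (f : ℝ →ᵇ ℝ) (y : ℝ) :
    |V y * (weight V y * f y)| ≤ ‖f‖ * (V y * weight V y) := by
  rw [abs_mul, abs_mul, abs_of_nonneg (hVnn y), abs_of_pos (weight_pos hVnn y)]
  calc V y * (weight V y * |f y|) = V y * weight V y * ‖f y‖ := by rw [Real.norm_eq_abs]; ring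
    _ ≤ V y * weight V y * ‖f‖ :=
        mul_le_mul_of_nonneg_left (f.norm_coe_le_norm y)
          (mul_nonneg (hVnn y) (weight_pos hVnn y).le)
    _ = ‖f‖ * (V y * weight V y) := mul_comm _ _

lemma integrableFirstMomentIic_mul_weight (hV : Continuous V) (hVnn : ∀ x, 0 ≤ V x)
    (hg : Integrable fun y => (1 + |y|) * V y) (f : ℝ →ᵇ ℝ) :
    IntegrableFirstMomentIic fun y => V y * (weight V y * f y) := by
  refine integrableFirstMomentIic_of_abs_le hVnn hg
    (hV.mul ((continuous_weight hV hg).mul f.continuous))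
    (c := ‖f‖ * exp (2 * ∫ y, (1 + |y|) * V y)) (by positivity) fun y => ?_
  have := hVnn y
  calc |V y * (weight V y * f y)| ≤ ‖f‖ * (V y * weight V y) := abs_mul_weight_mul_le hVnn f y
    _ ≤ ‖f‖ * (V y * (exp (2 * ∫ y, (1 + |y|) * V y) * (1 + max y 0))) := by
        gcongr
        exact weight_le hVnn hg y
    _ = ‖f‖ * exp (2 * ∫ y, (1 + |y|) * V y) * (1 + max y 0) * V y := by ring

lemma norm_one_add_volterra_div_weight_le (hV : Continuous V) (hVnn : ∀ x, 0 ≤ V x)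
    (hg : Integrable fun y => (1 + |y|) * V y) (f : ℝ →ᵇ ℝ) (x : ℝ) :
    ‖(1 + volterra (fun y => V y * (weight V y * f y)) x) / weight V x‖
      ≤ 1 + ‖f‖ / 2 := by
  have hw := one_le_weight hVnn x
  have hv := abs_volterra_le_of_abs_le_weight hV hVnn hg (norm_nonneg f)
    (abs_mul_weight_mul_le hVnn f) x
  have h1 := abs_add_le (1 : ℝ) (volterra (fun y => V y * (weight V y * f y)) x)
  rw [abs_one] at h1
  rw [norm_div, Real.norm_eq_abs, Real.norm_of_nonneg (weight_pos hVnn x).le,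
    div_le_iff₀ (weight_pos hVnn x)]
  nlinarith [norm_nonneg f]

/-- In terms of `ψ = weight V * f`, this is the map `ψ ↦ 1 + volterra (V ψ)`. -/
noncomputable def weightedVolterra (hV : Continuous V) (hVnn : ∀ x, 0 ≤ V x)
    (hg : Integrable fun y => (1 + |y|) * V y) (f : ℝ →ᵇ ℝ) : ℝ →ᵇ ℝ :=
  .ofNormedAddCommGroup
    (fun x => (1 + volterra (fun y => V y * (weight V y * f y)) x) / weight V x)
    ((continuous_const.add ((integrableFirstMomentIic_mul_weight hV hVnn hg f).continuous_volterra
      (hV.mul ((continuous_weight hV hg).mul f.continuous)))).div (continuous_weight hV hg)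
      fun x => (weight_pos hVnn x).ne')
    (1 + ‖f‖ / 2) (norm_one_add_volterra_div_weight_le hV hVnn hg f)

section WeightedVolterra

variable (hV : Continuous V) (hVnn : ∀ x, 0 ≤ V x) (hg : Integrable fun y => (1 + |y|) * V y)

lemma weightedVolterra_apply (f : ℝ →ᵇ ℝ) (x : ℝ) :
    weightedVolterra hV hVnn hg f x
      = (1 + volterra (fun y => V y * (weight V y * f y)) x) / weight V x :=
  rfl

lemma dist_weightedVolterra_le (f₁ f₂ : ℝ →ᵇ ℝ) :
    dist (weightedVolterra hV hVnn hg f₁) (weightedVolterra hV hVnn hg f₂)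
      ≤ 2⁻¹ * dist f₁ f₂ := by
  refine (BoundedContinuousFunction.dist_le (by positivity)).2 fun x => ?_
  have hw := weight_pos hVnn x
  have hsub : volterra (fun y => V y * (weight V y * f₁ y)) x
      - volterra (fun y => V y * (weight V y * f₂ y)) x
      = volterra (fun y => V y * (weight V y * (f₁ - f₂) y)) x := by
    rw [← (integrableFirstMomentIic_mul_weight hV hVnn hg f₁).volterra_sub
      (integrableFirstMomentIic_mul_weight hV hVnn hg f₂)]
    simp only [coe_sub, Pi.sub_apply, mul_sub]
  have hv := abs_volterra_le_of_abs_le_weight hV hVnn hg (norm_nonneg _)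
    (abs_mul_weight_mul_le hVnn (f₁ - f₂)) x
  rw [weightedVolterra_apply, weightedVolterra_apply, Real.dist_eq, div_sub_div_same,
    add_sub_add_left_eq_sub, hsub, abs_div, abs_of_pos hw, div_le_iff₀ hw, dist_eq_norm]
  linarith

lemma contractingWith_weightedVolterra : ContractingWith 2⁻¹ (weightedVolterra hV hVnn hg) :=
  ⟨by norm_num, LipschitzWith.of_dist_le_mul fun f₁ f₂ => by
    simpa using dist_weightedVolterra_le hV hVnn hg f₁ f₂⟩

lemma weightedVolterra_nonneg {f : ℝ →ᵇ ℝ} (hf : 0 ≤ f) :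
    0 ≤ weightedVolterra hV hVnn hg f :=
  fun x => div_nonneg (add_nonneg zero_le_one (volterra_nonneg (fun y =>
    mul_nonneg (hVnn y) (mul_nonneg (weight_pos hVnn y).le (hf y))) x)) (weight_pos hVnn x).le

end WeightedVolterra

lemma exists_volterra_fixedPoint (hV : Continuous V) (hVnn : ∀ x, 0 ≤ V x)
    (hg : Integrable fun y => (1 + |y|) * V y) :
    ∃ ψ : ℝ → ℝ, Continuous ψ ∧ (∀ x, 1 ≤ ψ x) ∧
      IntegrableFirstMomentIic (fun y => V y * ψ y) ∧
      ∀ x, ψ x = 1 + volterra (fun y => V y * ψ y) x := by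
  set T := weightedVolterra hV hVnn hg
  have hT := contractingWith_weightedVolterra hV hVnn hg
  set f := ContractingWith.fixedPoint T hT
  have hf0 : f ∈ Ici 0 := isClosed_Ici.mem_of_tendsto (hT.tendsto_iterate_fixedPoint 0)
    (Eventually.of_forall fun n =>
      (show MapsTo T (Ici 0) (Ici 0) from fun _ => weightedVolterra_nonneg hV hVnn hg).iterate n
        self_mem_Ici)
  have hfix : ∀ x, weight V x * f x = 1 + volterra (fun y => V y * (weight V y * f y)) x :=
    fun x => by
      have h := DFunLike.congr_fun (hT.fixedPoint_isFixedPt (f := T)) x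
      rw [weightedVolterra_apply, div_eq_iff (weight_pos hVnn x).ne'] at h
      rw [mul_comm, ← h]
  refine ⟨fun x => weight V x * f x, (continuous_weight hV hg).mul f.continuous, fun x => ?_,
    integrableFirstMomentIic_mul_weight hV hVnn hg f, hfix⟩
  show 1 ≤ weight V x * f x
  rw [hfix x]
  exact le_add_of_nonneg_right (volterra_nonneg (fun y =>
    mul_nonneg (hVnn y) (mul_nonneg (weight_pos hVnn y).le (hf0 y))) x)

end Weight

theorem exists_increasing_harmonic_general (V : ℝ → ℝ)
    (hV : Continuous V) (hVnn : ∀ x, 0 ≤ V x)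
    (hint : Integrable (fun x => |x| * V x)) :
    ∃ ψ₁ : ℝ → ℝ, ContDiff ℝ 2 ψ₁ ∧ (∀ x, 0 < ψ₁ x) ∧ Monotone ψ₁ ∧
      (∀ x, deriv (deriv ψ₁) x = V x * ψ₁ x) ∧
      Tendsto ψ₁ atBot (nhds 1) ∧
      Tendsto (fun x => x * deriv ψ₁ x) atBot (nhds 0) := by
  have hg : Integrable fun y => (1 + |y|) * V y :=
    ((hV.integrable_of_integrable_abs_mul hint).add hint).congr
      (Eventually.of_forall fun y => by simp only [Pi.add_apply]; ring)
  obtain ⟨ψ, hψc, hψ1, hq, hψeq⟩ := exists_volterra_fixedPoint hV hVnn hg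
  have hqc : Continuous fun y => V y * ψ y := hV.mul hψc
  have hq0 : ∀ y, 0 ≤ V y * ψ y := fun y => mul_nonneg (hVnn y) (zero_le_one.trans (hψ1 y))
  have hψ' : ∀ x, HasDerivAt ψ (∫ y in Iic x, V y * ψ y) x := fun x =>
    ((hq.hasDerivAt_volterra hqc x).const_add 1).congr_of_eventuallyEq
      (Eventually.of_forall hψeq)
  have hψ'' : ∀ x, HasDerivAt (fun t => ∫ y in Iic t, V y * ψ y) (V x * ψ x) x :=
    hasDerivAt_integral_Iic hqc fun b => (hq b).1
  have hderiv : deriv ψ = fun x => ∫ y in Iic x, V y * ψ y := funext fun x => (hψ' x).deriv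
  refine ⟨ψ, contDiff_two_of_hasDerivAt hψ' hψ'' hqc, fun x => one_pos.trans_le (hψ1 x),
    monotone_of_deriv_nonneg (fun x => (hψ' x).differentiableAt) fun x => ?_, fun x => ?_,
    ?_, ?_⟩
  · rw [hderiv]
    exact setIntegral_nonneg measurableSet_Iic fun y _ => hq0 y
  · rw [hderiv]
    exact (hψ'' x).deriv
  · simpa using ((hq.tendsto_volterra_atBot hq0).const_add 1).congr fun x => (hψeq x).symm
  · rw [hderiv]
    exact hq.tendsto_mul_integral_Iic_atBot hq0

/-- For `V` continuous, bounded, nonnegative with `0 < ∫ |x| V(x) dx < ∞`,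
there exists a positive increasing `C²` solution `ψ₁` of `-ψ'' + Vψ = 0` with
`ψ₁(x) → 1` and `x ψ₁'(x) → 0` as `x → -∞`. -/
theorem exists_increasing_harmonic (V : ℝ → ℝ)
    (hV : Continuous V) (hVbdd : ∃ M, ∀ x, V x ≤ M) (hVnn : ∀ x, 0 ≤ V x)
    (hint : Integrable (fun x => |x| * V x))
    (hpos : 0 < ∫ x : ℝ, |x| * V x) :
    ∃ ψ₁ : ℝ → ℝ, ContDiff ℝ 2 ψ₁ ∧ (∀ x, 0 < ψ₁ x) ∧ Monotone ψ₁ ∧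
      (∀ x, deriv (deriv ψ₁) x = V x * ψ₁ x) ∧
      Tendsto ψ₁ atBot (nhds 1) ∧
      Tendsto (fun x => x * deriv ψ₁ x) atBot (nhds 0) :=
  exists_increasing_harmonic_general V hV hVnn hint
end

section
/- Let V ∈ 𝒱 with associated ψ₁, ψ₂, ψ_* = (ψ₁ψ₂)^{1/2} and Wronskian k > 0. Let β ∈ [0,1). Then for every f ∈ C_0^2(ℝ), (1-β²)(k²/4) ∫_ℝ f²/ψ_*^{4+2β} dx ≤ ∫_ℝ (Sf) f ψ_*^{-2β} dx, where Sf = -f'' + Vf. -/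
/-!
Put `φ = √(ψ₁ψ₂)`. Differentiating `φ² = ψ₁ψ₂` twice and using the Wronskian gives
the Ermakov–Pinney equation `φ³ (-φ'' + Vφ) = k²/4`, and `(φφ')² ≤ (k/2)²` because
`ψ₁'ψ₂ · ψ₁ψ₂' ≤ 0`. For such a `φ`, completing the square gives, with `w = φ^(-2β)`,

  `(Sf) f w - (1-β²)(k²/4) f² w / φ⁴`
    `= [(f' - (1+β)(φ'/φ) f)² + β² (f/φ²)² ((k/2)² - (φφ')²)] w + D'`

where `D = (f² φ'/φ - f f') w` has compact support, so `∫ D' = 0` and the inequality follows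
by integrating.
-/

open MeasureTheory Real Filter Set

lemma deriv_deriv_mul {g h : ℝ → ℝ} (hg : ContDiff ℝ 2 g) (hh : ContDiff ℝ 2 h) (x : ℝ) :
    deriv (deriv fun y => g y * h y) x
      = deriv (deriv g) x * h x + 2 * (deriv g x * deriv h x) + g x * deriv (deriv h) x := by
  have hg1 := hg.differentiable two_ne_zero
  have hh1 := hh.differentiable two_ne_zero
  have hderiv : deriv (fun y => g y * h y) = fun y => deriv g y * h y + g y * deriv h y :=
    funext fun y => deriv_fun_mul (hg1 y) (hh1 y)
  rw [hderiv]
  refine (((hg.differentiable_deriv_two x).hasDerivAt.mul (hh1 x).hasDerivAt).add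
    ((hg1 x).hasDerivAt.mul (hh.differentiable_deriv_two x).hasDerivAt)).deriv.trans ?_
  ring

section SquareRootOfProduct

variable {V ψ₁ ψ₂ φ : ℝ → ℝ} {k : ℝ}

lemma two_mul_deriv_of_mul_self_eq (h1 : Differentiable ℝ ψ₁) (h2 : Differentiable ℝ ψ₂)
    (hφ : Differentiable ℝ φ) (hsq : ∀ x, φ x * φ x = ψ₁ x * ψ₂ x) (x : ℝ) :
    2 * (φ x * deriv φ x) = deriv ψ₁ x * ψ₂ x + ψ₁ x * deriv ψ₂ x := by
  have hderiv := congrArg (deriv · x) (funext hsq)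
  simp only [deriv_fun_mul (hφ x) (hφ x), deriv_fun_mul (h1 x) (h2 x)] at hderiv
  linarith

lemma ermakov_pinney_of_mul_self_eq (h1 : ContDiff ℝ 2 ψ₁) (h2 : ContDiff ℝ 2 ψ₂)
    (hφ : ContDiff ℝ 2 φ) (hsq : ∀ x, φ x * φ x = ψ₁ x * ψ₂ x)
    (heq1 : ∀ x, deriv (deriv ψ₁) x = V x * ψ₁ x)
    (heq2 : ∀ x, deriv (deriv ψ₂) x = V x * ψ₂ x)
    (hk : ∀ x, deriv ψ₁ x * ψ₂ x - ψ₁ x * deriv ψ₂ x = k) (x : ℝ) :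
    V x * φ x ^ 4 - φ x ^ 3 * deriv (deriv φ) x = k ^ 2 / 4 := by
  have hd1 := two_mul_deriv_of_mul_self_eq (h1.differentiable two_ne_zero)
    (h2.differentiable two_ne_zero) (hφ.differentiable two_ne_zero) hsq x
  have hd2 := deriv_deriv_mul hφ hφ x
  rw [funext hsq, deriv_deriv_mul h1 h2, heq1, heq2] at hd2
  rw [← hk x]
  linear_combination (φ x ^ 2 / 2) * hd2 + (V x * φ x ^ 2 - deriv ψ₁ x * deriv ψ₂ x) * hsq x
    + (2 * (φ x * deriv φ x) + deriv ψ₁ x * ψ₂ x + ψ₁ x * deriv ψ₂ x) / 4 * hd1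

lemma sq_mul_deriv_le_of_mul_self_eq (h1 : Differentiable ℝ ψ₁) (h2 : Differentiable ℝ ψ₂)
    (hφ : Differentiable ℝ φ) (h1pos : ∀ x, 0 < ψ₁ x) (h2pos : ∀ x, 0 < ψ₂ x)
    (h1mono : Monotone ψ₁) (h2anti : Antitone ψ₂) (hsq : ∀ x, φ x * φ x = ψ₁ x * ψ₂ x)
    (hk : ∀ x, deriv ψ₁ x * ψ₂ x - ψ₁ x * deriv ψ₂ x = k) (x : ℝ) :
    (φ x * deriv φ x) ^ 2 ≤ (k / 2) ^ 2 := by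
  have hd1 := two_mul_deriv_of_mul_self_eq h1 h2 hφ hsq x
  have hcross : deriv ψ₁ x * ψ₂ x * (ψ₁ x * deriv ψ₂ x) ≤ 0 :=
    mul_nonpos_of_nonneg_of_nonpos (mul_nonneg h1mono.deriv_nonneg (h2pos x).le)
      (mul_nonpos_of_nonneg_of_nonpos (h1pos x).le h2anti.deriv_nonpos)
  rw [show φ x * deriv φ x = (deriv ψ₁ x * ψ₂ x + ψ₁ x * deriv ψ₂ x) / 2 by linarith,
    ← hk x]
  nlinarith

end SquareRootOfProduct

section Hardy

variable {V f φ : ℝ → ℝ} {k β x : ℝ}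

noncomputable def hardyFlux (f φ : ℝ → ℝ) (β x : ℝ) : ℝ :=
  (f x ^ 2 * deriv φ x / φ x - f x * deriv f x) * φ x ^ (-(2 * β))

lemma hasDerivAt_hardyFlux (hf : ContDiff ℝ 2 f) (hφ : ContDiff ℝ 2 φ) (hx : φ x ≠ 0) :
    HasDerivAt (hardyFlux f φ β)
      ((2 * f x * deriv f x * deriv φ x / φ x + f x ^ 2 * deriv (deriv φ) x / φ x
          - f x ^ 2 * (deriv φ x / φ x) ^ 2 - deriv f x ^ 2 - f x * deriv (deriv f) x
          - 2 * β * (f x ^ 2 * deriv φ x / φ x - f x * deriv f x) * (deriv φ x / φ x))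
        * φ x ^ (-(2 * β))) x := by
  have hf₁ := (hf.differentiable two_ne_zero x).hasDerivAt
  have hf₂ := (hf.differentiable_deriv_two x).hasDerivAt
  have hφ₁ := (hφ.differentiable two_ne_zero x).hasDerivAt
  have hφ₂ := (hφ.differentiable_deriv_two x).hasDerivAt
  refine (((((hf₁.pow 2).mul hφ₂).div hφ₁ hx).sub (hf₁.mul hf₂)).mul
    (hφ₁.rpow_const (p := -(2 * β)) (Or.inl hx))).congr_deriv ?_
  simp only [Pi.sub_apply, Pi.mul_apply, Pi.div_apply, Pi.pow_apply]
  rw [rpow_sub_one hx]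
  field_simp
  ring

lemma add_deriv_hardyFlux_le (hf : ContDiff ℝ 2 f) (hφ : ContDiff ℝ 2 φ) (hx : 0 < φ x)
    (hEP : V x * φ x ^ 4 - φ x ^ 3 * deriv (deriv φ) x = k ^ 2 / 4)
    (hbound : (φ x * deriv φ x) ^ 2 ≤ (k / 2) ^ 2) :
    (1 - β ^ 2) * (k ^ 2 / 4) * (f x ^ 2 / φ x ^ ((4 : ℝ) + 2 * β))
        + deriv (hardyFlux f φ β) x
      ≤ (-deriv (deriv f) x + V x * f x) * f x / φ x ^ ((2 : ℝ) * β) := by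
  rw [(hasDerivAt_hardyFlux hf hφ hx.ne').deriv, rpow_add hx, rpow_neg hx.le, rpow_ofNat]
  have hw : 0 < φ x ^ (2 * β) := rpow_pos_of_pos hx _
  have hV : V x = (φ x ^ 3 * deriv (deriv φ) x + k ^ 2 / 4) / φ x ^ 4 := by
    field_simp
    linarith
  refine sub_nonneg.1 ((div_nonneg
    (add_nonneg (sq_nonneg (deriv f x - (1 + β) * (deriv φ x / φ x) * f x))
      (mul_nonneg (by positivity : 0 ≤ β ^ 2 * (f x / φ x ^ 2) ^ 2) (sub_nonneg.2 hbound)))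
    hw.le).trans_eq ?_)
  rw [hV]
  field_simp
  ring

lemma hasCompactSupport_hardyFlux (hfc : HasCompactSupport f) :
    HasCompactSupport (hardyFlux f φ β) :=
  hfc.mono fun x hx hfx => hx (by simp [hardyFlux, hfx])

lemma contDiff_hardyFlux (hf : ContDiff ℝ 2 f) (hφ : ContDiff ℝ 2 φ) (hφ0 : ∀ x, φ x ≠ 0) :
    ContDiff ℝ 1 (hardyFlux f φ β) := by
  have := hf.deriv' (n := 1)
  have := hφ.deriv' (n := 1)
  have := hf.of_le one_le_two
  have := hφ.of_le one_le_two
  have := hφ.rpow_const_of_ne hφ0 (p := -(2 * β))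
  unfold hardyFlux
  fun_prop (disch := exact hφ0 _)

theorem weighted_hardy_of_ermakov_pinney (hV : Continuous V) (hφ : ContDiff ℝ 2 φ)
    (hφpos : ∀ x, 0 < φ x)
    (hEP : ∀ x, V x * φ x ^ 4 - φ x ^ 3 * deriv (deriv φ) x = k ^ 2 / 4)
    (hbound : ∀ x, (φ x * deriv φ x) ^ 2 ≤ (k / 2) ^ 2)
    (hf : ContDiff ℝ 2 f) (hfc : HasCompactSupport f) :
    (1 - β ^ 2) * (k ^ 2 / 4) * ∫ x, f x ^ 2 / φ x ^ ((4 : ℝ) + 2 * β)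
      ≤ ∫ x, (-deriv (deriv f) x + V x * f x) * f x / φ x ^ ((2 : ℝ) * β) := by
  have hφ0 x : φ x ≠ 0 := (hφpos x).ne'
  have hw (p : ℝ) : Continuous fun x => φ x ^ p :=
    hφ.continuous.rpow_const fun x => Or.inl (hφ0 x)
  have hw0 (p : ℝ) (x : ℝ) : φ x ^ p ≠ 0 := (rpow_pos_of_pos (hφpos x) p).ne'
  have hf'' : Continuous (deriv (deriv f)) := (hf.deriv' (n := 1)).continuous_deriv le_rfl
  have hB : Integrable fun x => f x ^ 2 / φ x ^ ((4 : ℝ) + 2 * β) :=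
    ((hf.continuous.pow 2).div (hw _) (hw0 _)).integrable_of_hasCompactSupport
      (hfc.mono fun x hx hfx => hx (by simp [hfx]))
  have hA : Integrable fun x =>
      (-deriv (deriv f) x + V x * f x) * f x / φ x ^ ((2 : ℝ) * β) :=
    (((hf''.neg.add (hV.mul hf.continuous)).mul hf.continuous).div (hw _) (hw0 _)
      ).integrable_of_hasCompactSupport (hfc.mono fun x hx hfx => hx (by simp [hfx]))
  have hD := contDiff_hardyFlux (β := β) hf hφ hφ0
  have hDc := hasCompactSupport_hardyFlux (φ := φ) (β := β) hfc
  have hD' : Integrable (deriv (hardyFlux f φ β)) :=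
    (hD.continuous_deriv le_rfl).integrable_of_hasCompactSupport hDc.deriv
  have hD0 : ∫ x, deriv (hardyFlux f φ β) x = 0 :=
    integral_eq_zero_of_hasDerivAt_of_integrable
      (fun x => (hD.differentiable one_ne_zero x).hasDerivAt) hD'
      (hD.continuous.integrable_of_hasCompactSupport hDc)
  calc (1 - β ^ 2) * (k ^ 2 / 4) * ∫ x, f x ^ 2 / φ x ^ ((4 : ℝ) + 2 * β)
      = ∫ x, (1 - β ^ 2) * (k ^ 2 / 4) * (f x ^ 2 / φ x ^ ((4 : ℝ) + 2 * β))
          + deriv (hardyFlux f φ β) x := by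
        rw [integral_add (hB.const_mul _) hD', integral_const_mul, hD0, add_zero]
    _ ≤ _ := integral_mono ((hB.const_mul _).add hD') hA fun x =>
        add_deriv_hardyFlux_le hf hφ (hφpos x) (hEP x) (hbound x)

end Hardy

theorem weighted_hardy_rellich_general (V ψ₁ ψ₂ : ℝ → ℝ) (k β : ℝ)
    (hV : Continuous V)
    (h1 : ContDiff ℝ 2 ψ₁) (h2 : ContDiff ℝ 2 ψ₂)
    (h1pos : ∀ x, 0 < ψ₁ x) (h2pos : ∀ x, 0 < ψ₂ x)
    (h1mono : Monotone ψ₁) (h2anti : Antitone ψ₂)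
    (heq1 : ∀ x, deriv (deriv ψ₁) x = V x * ψ₁ x)
    (heq2 : ∀ x, deriv (deriv ψ₂) x = V x * ψ₂ x)
    (hk : ∀ x, deriv ψ₁ x * ψ₂ x - ψ₁ x * deriv ψ₂ x = k) :
    ∀ f : ℝ → ℝ, ContDiff ℝ 2 f → HasCompactSupport f →
      (1 - β ^ 2) * (k ^ 2 / 4) *
          ∫ x : ℝ, f x ^ 2 / Real.sqrt (ψ₁ x * ψ₂ x) ^ ((4 : ℝ) + 2 * β)
        ≤ ∫ x : ℝ, (-deriv (deriv f) x + V x * f x) * f x /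
            Real.sqrt (ψ₁ x * ψ₂ x) ^ ((2 : ℝ) * β) := by
  intro f hf hfc
  have hu x : 0 < ψ₁ x * ψ₂ x := mul_pos (h1pos x) (h2pos x)
  have hφ : ContDiff ℝ 2 fun x => √(ψ₁ x * ψ₂ x) :=
    (h1.mul h2).sqrt fun x => (hu x).ne'
  have hsq x : √(ψ₁ x * ψ₂ x) * √(ψ₁ x * ψ₂ x) = ψ₁ x * ψ₂ x := mul_self_sqrt (hu x).le
  exact weighted_hardy_of_ermakov_pinney hV hφ (fun x => sqrt_pos.2 (hu x))
    (ermakov_pinney_of_mul_self_eq h1 h2 hφ hsq heq1 heq2 hk)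
    (sq_mul_deriv_le_of_mul_self_eq (h1.differentiable two_ne_zero)
      (h2.differentiable two_ne_zero) (hφ.differentiable two_ne_zero) h1pos h2pos h1mono h2anti
      hsq hk) hf hfc

/-- Weighted Hardy–Rellich type inequality: for `V ∈ 𝒱` with normalized
positive solutions `ψ₁, ψ₂`, `ψ_* = √(ψ₁ψ₂)`, Wronskian `k > 0` and
`β ∈ [0,1)`, every `f ∈ C₀²(ℝ)` satisfies
`(1-β²)(k²/4) ∫ f²/ψ_*^{4+2β} ≤ ∫ (Sf) f ψ_*^{-2β}` with `Sf = -f'' + Vf`. -/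
theorem weighted_hardy_rellich (V ψ₁ ψ₂ : ℝ → ℝ) (k β : ℝ)
    (hV : Continuous V) (hVbdd : ∃ M, ∀ x, V x ≤ M) (hVnn : ∀ x, 0 ≤ V x)
    (hint : Integrable (fun x => |x| * V x))
    (hpos : 0 < ∫ x : ℝ, |x| * V x)
    (h1 : ContDiff ℝ 2 ψ₁) (h2 : ContDiff ℝ 2 ψ₂)
    (h1pos : ∀ x, 0 < ψ₁ x) (h2pos : ∀ x, 0 < ψ₂ x)
    (h1mono : Monotone ψ₁) (h2anti : Antitone ψ₂)
    (heq1 : ∀ x, deriv (deriv ψ₁) x = V x * ψ₁ x)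
    (heq2 : ∀ x, deriv (deriv ψ₂) x = V x * ψ₂ x)
    (hk : ∀ x, deriv ψ₁ x * ψ₂ x - ψ₁ x * deriv ψ₂ x = k) (hkpos : 0 < k)
    (hβ0 : 0 ≤ β) (hβ1 : β < 1) :
    ∀ f : ℝ → ℝ, ContDiff ℝ 2 f → HasCompactSupport f →
      (1 - β ^ 2) * (k ^ 2 / 4) *
          ∫ x : ℝ, f x ^ 2 / Real.sqrt (ψ₁ x * ψ₂ x) ^ ((4 : ℝ) + 2 * β)
        ≤ ∫ x : ℝ, (-deriv (deriv f) x + V x * f x) * f x /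
            Real.sqrt (ψ₁ x * ψ₂ x) ^ ((2 : ℝ) * β) :=
  weighted_hardy_rellich_general V ψ₁ ψ₂ k β hV h1 h2 h1pos h2pos h1mono h2anti heq1 heq2 hk
end

section
/- Let V ∈ 𝒱, β ∈ [0,1), and let S = -d²/dx² + V with ψ_* as above. Then for every f ∈ C_0^2(ℝ), ‖ψ_*^{-2-β} f‖_{L^2} ≤ C ‖Sf‖_{L^2}^{(2+β)/4} ‖f‖_{L^2}^{(2-β)/4}, where C = (4/((1-β²)k²))^{(2+β)/4}. -/
/-!
Write `p = ψ₁ ψ₂ = ψ_*²`. For any positive weight `w` and any `G`, adding the integral of the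
exact derivative `(f (f (w'/2 + G) - f' w))'` to `∫ (S f) f w` and completing the square gives
`∫ (S f) f w ≥ ∫ f² (V w - w''/2 - G' - G²/w)`. With `w = p^{-β}` and `G = (1+β)/2 · p' p^{-β-1}`
the bracket equals `(1-β²) k²/4 · p^{-2-β} - β² ψ₁' ψ₂' p^{-1-β}`, and `ψ₁' ψ₂' ≤ 0`; this is
`(1-β²)(k²/4)‖ψ_*^{-2-β} f‖² ≤ ∫ (S f) f ψ_*^{-2β}`. Cauchy–Schwarz and the Hölder interpolation
`‖ψ_*^{-2β} f‖ ≤ ‖f‖^{(2-β)/(2+β)} ‖ψ_*^{-2-β} f‖^{2β/(2+β)}` then let the power of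
`‖ψ_*^{-2-β} f‖` be absorbed into the left-hand side.
-/

open MeasureTheory Real

theorem integral_rpow_mul_rpow_le {α : Type*} [MeasurableSpace α] {μ : Measure α} {u v : α → ℝ}
    (hu0 : 0 ≤ u) (hv0 : 0 ≤ v) (hu : Integrable u μ) (hv : Integrable v μ) {p q : ℝ}
    (hp : 0 ≤ p) (hq : 0 ≤ q) (hpq : p + q = 1) :
    ∫ a, u a ^ p * v a ^ q ∂μ ≤ (∫ a, u a ∂μ) ^ p * (∫ a, v a ∂μ) ^ q := by
  have huv : AEStronglyMeasurable (fun a => u a ^ p * v a ^ q) μ :=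
    ((hu.aemeasurable.pow_const p).mul (hv.aemeasurable.pow_const q)).aestronglyMeasurable
  have huv0 : 0 ≤ᵐ[μ] fun a => u a ^ p * v a ^ q :=
    .of_forall fun a => mul_nonneg (rpow_nonneg (hu0 a) p) (rpow_nonneg (hv0 a) q)
  rw [integral_eq_lintegral_of_nonneg_ae huv0 huv,
    integral_eq_lintegral_of_nonneg_ae (.of_forall hu0) hu.1,
    integral_eq_lintegral_of_nonneg_ae (.of_forall hv0) hv.1,
    ENNReal.toReal_rpow, ENNReal.toReal_rpow, ← ENNReal.toReal_mul]
  refine ENNReal.toReal_mono (ENNReal.mul_ne_top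
    (ENNReal.rpow_ne_top_of_nonneg hp hu.lintegral_lt_top.ne)
    (ENNReal.rpow_ne_top_of_nonneg hq hv.lintegral_lt_top.ne)) ?_
  calc ∫⁻ a, ENNReal.ofReal (u a ^ p * v a ^ q) ∂μ
      = ∫⁻ a, ENNReal.ofReal (u a) ^ p * ENNReal.ofReal (v a) ^ q ∂μ := by
        congr with a
        rw [ENNReal.ofReal_mul (rpow_nonneg (hu0 a) p), ENNReal.ofReal_rpow_of_nonneg (hu0 a) hp,
          ENNReal.ofReal_rpow_of_nonneg (hv0 a) hq]
    _ ≤ _ := ENNReal.lintegral_mul_norm_pow_le hu.aemeasurable.ennreal_ofReal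
        hv.aemeasurable.ennreal_ofReal hp hq hpq

theorem integral_mul_le_L2_mul_L2 {α : Type*} [MeasurableSpace α] {μ : Measure α} {g h : α → ℝ}
    (hg : Integrable (fun a => g a ^ 2) μ) (hh : Integrable (fun a => h a ^ 2) μ) :
    ∫ a, g a * h a ∂μ ≤ (∫ a, g a ^ 2 ∂μ) ^ (1 / 2 : ℝ) * (∫ a, h a ^ 2 ∂μ) ^ (1 / 2 : ℝ) := by
  calc ∫ a, g a * h a ∂μ ≤ ‖∫ a, g a * h a ∂μ‖ := le_abs_self _
    _ ≤ ∫ a, ‖g a * h a‖ ∂μ := norm_integral_le_integral_norm _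
    _ = ∫ a, (g a ^ 2) ^ (1 / 2 : ℝ) * (h a ^ 2) ^ (1 / 2 : ℝ) ∂μ := by
        congr with a
        rw [← sqrt_eq_rpow, ← sqrt_eq_rpow, sqrt_sq_eq_abs, sqrt_sq_eq_abs, norm_mul,
          Real.norm_eq_abs, Real.norm_eq_abs]
    _ ≤ _ := integral_rpow_mul_rpow_le (fun a => sq_nonneg (g a)) (fun a => sq_nonneg (h a))
        hg hh (by norm_num) (by norm_num) (by norm_num)

theorem integral_sq_mul_rpow_le {α : Type*} [MeasurableSpace α] {μ : Measure α} {f p : α → ℝ}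
    {β : ℝ} (hβ0 : 0 ≤ β) (hβ2 : β ≤ 2) (hp : ∀ a, 0 < p a) (hf : Integrable (fun a => f a ^ 2) μ)
    (hfp : Integrable (fun a => f a ^ 2 * p a ^ (-(2 + β))) μ) :
    ∫ a, (f a * p a ^ (-β)) ^ 2 ∂μ
      ≤ (∫ a, f a ^ 2 ∂μ) ^ ((2 - β) / (2 + β))
        * (∫ a, f a ^ 2 * p a ^ (-(2 + β)) ∂μ) ^ (2 * β / (2 + β)) := by
  have h2β : 0 < 2 + β := by linarith
  have hsum : (2 - β) / (2 + β) + 2 * β / (2 + β) = 1 := by field_simp; ring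
  convert integral_rpow_mul_rpow_le (fun a => sq_nonneg (f a))
    (fun a => mul_nonneg (sq_nonneg (f a)) (rpow_pos_of_pos (hp a) _).le) hf hfp
    (p := (2 - β) / (2 + β)) (q := 2 * β / (2 + β)) (div_nonneg (by linarith) h2β.le)
    (by positivity) hsum using 3 with a
  rw [mul_rpow (sq_nonneg _) (rpow_pos_of_pos (hp a) _).le, ← mul_assoc,
    ← rpow_add' (sq_nonneg _) (by rw [hsum]; norm_num), hsum, rpow_one, ← rpow_mul (hp a).le,
    mul_pow, ← rpow_natCast (p a ^ (-β)), ← rpow_mul (hp a).le]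
  congr 2
  push_cast
  field_simp

theorem rpow_le_of_le_mul_rpow {A X t : ℝ} (hA : 0 ≤ A) (hX : 0 ≤ X) (ht : t < 1)
    (h : A ≤ X * A ^ t) : A ^ (1 - t) ≤ X := by
  rcases hA.eq_or_lt with rfl | hA
  · rwa [zero_rpow (by linarith)]
  rwa [rpow_sub hA, rpow_one, div_le_iff₀ (rpow_pos_of_pos hA t)]

theorem rpow_half_le_of_interpolation {A B D M c β : ℝ} (hA : 0 ≤ A) (hB : 0 ≤ B) (hD : 0 ≤ D)
    (hM : 0 ≤ M) (hc : 0 < c) (hβ : 0 < 2 + β)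
    (hAM : c * A ≤ B ^ (1 / 2 : ℝ) * M ^ (1 / 2 : ℝ))
    (hMA : M ≤ D ^ ((2 - β) / (2 + β)) * A ^ (2 * β / (2 + β))) :
    A ^ (1 / 2 : ℝ) ≤ c⁻¹ ^ ((2 + β) / 4) * B ^ ((2 + β) / 8) * D ^ ((2 - β) / 8) := by
  set X := c⁻¹ * B ^ (1 / 2 : ℝ) * D ^ ((2 - β) / (2 + β) / 2)
  have hX : 0 ≤ X := by positivity
  have hAX : A ≤ X * A ^ (β / (2 + β)) := by
    rw [← le_div_iff₀' hc, div_eq_inv_mul] at hAM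
    calc A ≤ c⁻¹ * (B ^ (1 / 2 : ℝ) * M ^ (1 / 2 : ℝ)) := hAM
      _ ≤ c⁻¹ * (B ^ (1 / 2 : ℝ)
          * (D ^ ((2 - β) / (2 + β)) * A ^ (2 * β / (2 + β))) ^ (1 / 2 : ℝ)) := by
          gcongr
      _ = X * A ^ (β / (2 + β)) := by
          rw [mul_rpow (by positivity) (by positivity), ← rpow_mul hD, ← rpow_mul hA]
          simp only [X]
          ring_nf
  calc A ^ (1 / 2 : ℝ) = (A ^ (1 - β / (2 + β))) ^ ((2 + β) / 4) := by
        rw [← rpow_mul hA]; congr 1; field_simp; ring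
    _ ≤ X ^ ((2 + β) / 4) := by
        gcongr
        exact rpow_le_of_le_mul_rpow hA hX (by rw [div_lt_one hβ]; linarith) hAX
    _ = _ := by
        simp only [X]
        rw [mul_rpow (by positivity) (by positivity), mul_rpow (by positivity) (by positivity),
          ← rpow_mul hB, ← rpow_mul hD, show (1 / 2 : ℝ) * ((2 + β) / 4) = (2 + β) / 8 by ring,
          show (2 - β) / (2 + β) / 2 * ((2 + β) / 4) = (2 - β) / 8 by field_simp; ring]

theorem div_sqrt_rpow_sq (a : ℝ) {P s : ℝ} (hP : 0 < P) :
    (a / √P ^ s) ^ 2 = a ^ 2 * P ^ (-s) := by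
  rw [div_pow, sqrt_eq_rpow, ← rpow_mul hP.le, ← rpow_mul_natCast hP.le, div_eq_mul_inv,
    ← rpow_neg hP.le]
  push_cast
  ring_nf

theorem integral_sq_mul_le_integral_schrodinger_mul {V f w w' w'' G G' q : ℝ → ℝ}
    (hV : Continuous V) (hf : ContDiff ℝ 2 f) (hfs : HasCompactSupport f)
    (hw : ∀ x, HasDerivAt w (w' x) x) (hw' : ∀ x, HasDerivAt w' (w'' x) x) (hw''c : Continuous w'')
    (hG : ∀ x, HasDerivAt G (G' x) x) (hG'c : Continuous G') (hwpos : ∀ x, 0 < w x)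
    (hq : Continuous q) (hqle : ∀ x, q x ≤ V x * w x - w'' x / 2 - G' x - G x ^ 2 / w x) :
    ∫ x, f x ^ 2 * q x ≤ ∫ x, (-deriv (deriv f) x + V x * f x) * (f x * w x) := by
  have hf' : ContDiff ℝ 1 (deriv f) := hf.deriv'
  have hfd : ∀ x, HasDerivAt f (deriv f x) x :=
    fun x => (hf.differentiable (by norm_num) x).hasDerivAt
  have hf'd : ∀ x, HasDerivAt (deriv f) (deriv (deriv f) x) x :=
    fun x => (hf'.differentiable one_ne_zero x).hasDerivAt
  have hfc : Continuous f := hf.continuous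
  have hf'c : Continuous (deriv f) := hf'.continuous
  have hf''c : Continuous (deriv (deriv f)) := hf'.continuous_deriv le_rfl
  have hwc : Continuous w := continuous_iff_continuousAt.2 fun x => (hw x).continuousAt
  have hw'c : Continuous w' := continuous_iff_continuousAt.2 fun x => (hw' x).continuousAt
  have hGc : Continuous G := continuous_iff_continuousAt.2 fun x => (hG x).continuousAt
  have hvanish : ∀ x ∉ tsupport f, f x = 0 ∧ deriv f x = 0 ∧ deriv (deriv f) x = 0 := by
    intro x hx
    refine ⟨image_eq_zero_of_notMem_tsupport hx, image_eq_zero_of_notMem_tsupport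
      fun h => hx (tsupport_deriv_subset h), image_eq_zero_of_notMem_tsupport
      fun h => hx (tsupport_deriv_subset (tsupport_deriv_subset h))⟩
  have hint : ∀ g : ℝ → ℝ, Continuous g → (∀ x ∉ tsupport f, g x = 0) → Integrable g :=
    fun g hg h0 => hg.integrable_of_hasCompactSupport (HasCompactSupport.intro hfs h0)
  have hF : ∀ x, HasDerivAt (fun y => f y * (f y * (w' y / 2 + G y) - deriv f y * w y))
      (deriv f x * (f x * (w' x / 2 + G x) - deriv f x * w x) + f x * (deriv f x *
        (w' x / 2 + G x) + f x * (w'' x / 2 + G' x) - (deriv (deriv f) x * w x + deriv f x * w' x)))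
      x := fun x =>
    (hfd x).mul (((hfd x).mul (((hw' x).div_const 2).add (hG x))).sub ((hf'd x).mul (hw x)))
  rw [← sub_zero (∫ x, _ * (f x * w x)), ← integral_eq_zero_of_hasDerivAt_of_integrable hF ?_ ?_,
    ← integral_sub ?_ ?_]
  refine integral_mono ?_ ?_ fun x => ?_
  on_goal 3 =>
    have hw0 := hwpos x
    calc f x ^ 2 * q x
        ≤ (deriv f x * w x - f x * G x) ^ 2 / w x
          + f x ^ 2 * (V x * w x - w'' x / 2 - G' x - G x ^ 2 / w x) :=
          le_add_of_nonneg_of_le (by positivity) (mul_le_mul_of_nonneg_left (hqle x) (sq_nonneg _))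
      _ = _ := by
          field_simp
          ring
  all_goals exact hint _ (by fun_prop) fun x hx => by simp [hvanish x hx]

theorem integral_sq_mul_le_integral_schrodinger_mul_rpow {V f p p' p'' q : ℝ → ℝ} {β : ℝ}
    (hV : Continuous V) (hf : ContDiff ℝ 2 f) (hfs : HasCompactSupport f)
    (hp : ∀ x, HasDerivAt p (p' x) x) (hp' : ∀ x, HasDerivAt p' (p'' x) x)
    (hp''c : Continuous p'') (hpos : ∀ x, 0 < p x) (hq : Continuous q)
    (hqle : ∀ x, q x ≤ V x * p x ^ (-β) - p'' x / 2 * p x ^ (-β - 1)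
      + (1 - β ^ 2) / 4 * p' x ^ 2 * p x ^ (-(2 + β))) :
    ∫ x, f x ^ 2 * q x ≤ ∫ x, (-deriv (deriv f) x + V x * f x) * (f x * p x ^ (-β)) := by
  have hpc : Continuous p := continuous_iff_continuousAt.2 fun x => (hp x).continuousAt
  have hp'c : Continuous p' := continuous_iff_continuousAt.2 fun x => (hp' x).continuousAt
  have hpow : ∀ e : ℝ, Continuous fun x => p x ^ e := fun e =>
    hpc.rpow_const fun x => Or.inl (hpos x).ne'
  have hpowd : ∀ e x : ℝ, HasDerivAt (fun y => p y ^ e) (p' x * e * p x ^ (e - 1)) x :=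
    fun e x => (hp x).rpow_const (Or.inl (hpos x).ne')
  have hpg : ∀ c x : ℝ, HasDerivAt (fun y => p' y * c * p y ^ (-β - 1))
      (p'' x * c * p x ^ (-β - 1) + p' x * c * (p' x * (-β - 1) * p x ^ (-β - 1 - 1))) x :=
    fun c x => ((hp' x).mul_const c).mul (hpowd _ x)
  refine integral_sq_mul_le_integral_schrodinger_mul hV hf hfs (hpowd (-β)) (hpg (-β))
    (by fun_prop) (hpg ((1 + β) / 2)) (by fun_prop) (fun x => rpow_pos_of_pos (hpos x) _) hq
    fun x => (hqle x).trans_eq ?_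
  have hpx := hpos x
  have hr := rpow_pos_of_pos hpx (-(2 + β))
  rw [show -β - 1 - 1 = -(2 + β) by ring, show -β - 1 = -(2 + β) + 1 by ring,
    show -β = -(2 + β) + 1 + 1 by ring, rpow_add_one hpx.ne', rpow_add_one hpx.ne']
  field_simp
  ring

theorem weighted_hardy_inequality {V ψ₁ ψ₂ f : ℝ → ℝ} {k β : ℝ} (hV : Continuous V)
    (h1 : ContDiff ℝ 2 ψ₁) (h2 : ContDiff ℝ 2 ψ₂) (h1pos : ∀ x, 0 < ψ₁ x) (h2pos : ∀ x, 0 < ψ₂ x)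
    (h1mono : Monotone ψ₁) (h2anti : Antitone ψ₂)
    (heq1 : ∀ x, deriv (deriv ψ₁) x = V x * ψ₁ x) (heq2 : ∀ x, deriv (deriv ψ₂) x = V x * ψ₂ x)
    (hk : ∀ x, deriv ψ₁ x * ψ₂ x - ψ₁ x * deriv ψ₂ x = k)
    (hf : ContDiff ℝ 2 f) (hfs : HasCompactSupport f) :
    (1 - β ^ 2) * k ^ 2 / 4 * ∫ x, f x ^ 2 * (ψ₁ x * ψ₂ x) ^ (-(2 + β))
      ≤ ∫ x, (-deriv (deriv f) x + V x * f x) * (f x * (ψ₁ x * ψ₂ x) ^ (-β)) := by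
  set d₁ := deriv ψ₁
  set d₂ := deriv ψ₂
  have hψ₁ : ∀ x, HasDerivAt ψ₁ (d₁ x) x := fun x => (h1.differentiable two_ne_zero x).hasDerivAt
  have hψ₂ : ∀ x, HasDerivAt ψ₂ (d₂ x) x := fun x => (h2.differentiable two_ne_zero x).hasDerivAt
  have hd₁ : ∀ x, HasDerivAt d₁ (V x * ψ₁ x) x := fun x =>
    heq1 x ▸ (h1.deriv'.differentiable one_ne_zero x).hasDerivAt
  have hd₂ : ∀ x, HasDerivAt d₂ (V x * ψ₂ x) x := fun x =>
    heq2 x ▸ (h2.deriv'.differentiable one_ne_zero x).hasDerivAt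
  have hψ₁c := h1.continuous
  have hψ₂c := h2.continuous
  have hd₁c : Continuous d₁ := h1.continuous_deriv one_le_two
  have hd₂c : Continuous d₂ := h2.continuous_deriv one_le_two
  have hP : ∀ x, 0 < ψ₁ x * ψ₂ x := fun x => mul_pos (h1pos x) (h2pos x)
  rw [← integral_const_mul]
  simp_rw [← mul_assoc, mul_comm _ (f _ ^ 2), mul_assoc]
  refine integral_sq_mul_le_integral_schrodinger_mul_rpow hV hf hfs
    (fun x => (hψ₁ x).mul (hψ₂ x)) (fun x => ((hd₁ x).mul (hψ₂ x)).add ((hψ₁ x).mul (hd₂ x)))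
    (by fun_prop) hP (continuous_const.mul ((hψ₁c.mul hψ₂c).rpow_const fun x => Or.inl (hP x).ne'))
    fun x => ?_
  have hd : d₁ x * d₂ x ≤ 0 :=
    mul_nonpos_of_nonneg_of_nonpos h1mono.deriv_nonneg h2anti.deriv_nonpos
  have hr := rpow_pos_of_pos (hP x) (-(2 + β))
  rw [show -β - 1 = -(2 + β) + 1 by ring, show -β = -(2 + β) + 1 + 1 by ring,
    rpow_add_one (hP x).ne', rpow_add_one (hP x).ne', ← hk x]
  -- the `V`-terms cancel and `p'² = k² + 4 ψ₁' ψ₂' p`, leaving `- β² ψ₁' ψ₂' p^{-1-β} ≥ 0`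
  nlinarith [mul_nonneg (mul_nonneg (sq_nonneg β) (neg_nonneg.2 hd))
    (mul_nonneg hr.le (hP x).le)]

theorem hardy_rellich_interpolation_general (V ψ₁ ψ₂ : ℝ → ℝ) (k β : ℝ)
    (hV : Continuous V)
    (h1 : ContDiff ℝ 2 ψ₁) (h2 : ContDiff ℝ 2 ψ₂)
    (h1pos : ∀ x, 0 < ψ₁ x) (h2pos : ∀ x, 0 < ψ₂ x)
    (h1mono : Monotone ψ₁) (h2anti : Antitone ψ₂)
    (heq1 : ∀ x, deriv (deriv ψ₁) x = V x * ψ₁ x)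
    (heq2 : ∀ x, deriv (deriv ψ₂) x = V x * ψ₂ x)
    (hk : ∀ x, deriv ψ₁ x * ψ₂ x - ψ₁ x * deriv ψ₂ x = k) (hkpos : 0 < k)
    (hβ0 : 0 ≤ β) (hβ1 : β < 1) :
    ∀ f : ℝ → ℝ, ContDiff ℝ 2 f → HasCompactSupport f →
      (∫ x : ℝ, (f x / Real.sqrt (ψ₁ x * ψ₂ x) ^ ((2 : ℝ) + β)) ^ 2) ^ ((1 : ℝ) / 2)
        ≤ (4 / ((1 - β ^ 2) * k ^ 2)) ^ ((2 + β) / 4) *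
            (∫ x : ℝ, (-deriv (deriv f) x + V x * f x) ^ 2) ^ ((2 + β) / 8) *
            (∫ x : ℝ, f x ^ 2) ^ ((2 - β) / 8) := by
  intro f hf hfs
  have hP : ∀ x, 0 < ψ₁ x * ψ₂ x := fun x => mul_pos (h1pos x) (h2pos x)
  have hpow : ∀ e : ℝ, Continuous fun x => (ψ₁ x * ψ₂ x) ^ e := fun e =>
    (h1.continuous.mul h2.continuous).rpow_const fun x => Or.inl (hP x).ne'
  have hf''c : Continuous (deriv (deriv f)) := (hf.deriv' (n := 1)).continuous_deriv le_rfl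
  have hSf := ((hf''c.neg.add (hV.mul hf.continuous)).memLp_of_hasCompactSupport (μ := volume)
    (p := 2) (hfs.deriv.deriv.neg.add hfs.mul_left)).integrable_sq
  have hfw := ((hf.continuous.mul (hpow (-β))).memLp_of_hasCompactSupport (μ := volume) (p := 2)
    hfs.mul_right).integrable_sq
  have hf2 := (hf.continuous.memLp_of_hasCompactSupport (μ := volume) (p := 2) hfs).integrable_sq
  have hA : Integrable fun x => f x ^ 2 * (ψ₁ x * ψ₂ x) ^ (-(2 + β)) :=
    ((hf.continuous.pow 2).mul (hpow _)).integrable_of_hasCompactSupport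
      (hfs.comp_left (zero_pow two_ne_zero)).mul_right
  have hc₀ : 0 < (1 - β ^ 2) * k ^ 2 / 4 := by
    have : 0 < 1 - β ^ 2 := by nlinarith
    positivity
  rw [integral_congr_ae (.of_forall fun x => div_sqrt_rpow_sq (f x) (hP x)),
    ← inv_div ((1 - β ^ 2) * k ^ 2)]
  exact rpow_half_le_of_interpolation
    (integral_nonneg fun x => mul_nonneg (sq_nonneg _) (rpow_nonneg (hP x).le _))
    (integral_nonneg fun x => by positivity) (integral_nonneg fun x => by positivity)
    (integral_nonneg fun x => by positivity) hc₀ (by linarith)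
    ((weighted_hardy_inequality hV h1 h2 h1pos h2pos h1mono h2anti heq1 heq2 hk hf hfs).trans
      (integral_mul_le_L2_mul_L2 hSf hfw))
    (integral_sq_mul_rpow_le hβ0 (by linarith) hP hf2 hA)

/-- Hardy–Rellich inequality: for `V ∈ 𝒱`, `β ∈ [0,1)`, `ψ_* = √(ψ₁ψ₂)` and
`S f = -f'' + V f`, every `f ∈ C₀²(ℝ)` satisfies
`‖ψ_*^{-2-β} f‖_{L²} ≤ C ‖Sf‖_{L²}^{(2+β)/4} ‖f‖_{L²}^{(2-β)/4}` with
`C = (4/((1-β²)k²))^{(2+β)/4}`. -/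
theorem hardy_rellich_interpolation (V ψ₁ ψ₂ : ℝ → ℝ) (k β : ℝ)
    (hV : Continuous V) (hVbdd : ∃ M, ∀ x, V x ≤ M) (hVnn : ∀ x, 0 ≤ V x)
    (hint : Integrable (fun x => |x| * V x))
    (hpos : 0 < ∫ x : ℝ, |x| * V x)
    (h1 : ContDiff ℝ 2 ψ₁) (h2 : ContDiff ℝ 2 ψ₂)
    (h1pos : ∀ x, 0 < ψ₁ x) (h2pos : ∀ x, 0 < ψ₂ x)
    (h1mono : Monotone ψ₁) (h2anti : Antitone ψ₂)
    (heq1 : ∀ x, deriv (deriv ψ₁) x = V x * ψ₁ x)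
    (heq2 : ∀ x, deriv (deriv ψ₂) x = V x * ψ₂ x)
    (hk : ∀ x, deriv ψ₁ x * ψ₂ x - ψ₁ x * deriv ψ₂ x = k) (hkpos : 0 < k)
    (hβ0 : 0 ≤ β) (hβ1 : β < 1) :
    ∀ f : ℝ → ℝ, ContDiff ℝ 2 f → HasCompactSupport f →
      (∫ x : ℝ, (f x / Real.sqrt (ψ₁ x * ψ₂ x) ^ ((2 : ℝ) + β)) ^ 2) ^ ((1 : ℝ) / 2)
        ≤ (4 / ((1 - β ^ 2) * k ^ 2)) ^ ((2 + β) / 4) *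
            (∫ x : ℝ, (-deriv (deriv f) x + V x * f x) ^ 2) ^ ((2 + β) / 8) *
            (∫ x : ℝ, f x ^ 2) ^ ((2 - β) / 8) :=
  hardy_rellich_interpolation_general V ψ₁ ψ₂ k β hV h1 h2 h1pos h2pos h1mono h2anti heq1 heq2 hk
    hkpos hβ0 hβ1
end
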